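/- arXiv:1901.00339 — 3 statements merged into one kernel-verified Lean document; each statement's English description precedes it below -/
import Mathlib

section
/- Let G be a connected oriented graph in which all path counts are finite. Then for any vertices u,v: limsup_{n→∞} (1/n) log p_{uv}^G(n) = −log R(G) (so this limsup is independent of u and v), and moreover −log R(G) = sup{ limsup_{n→∞} (1/n) log p_{ww}^H(n) : H a finite subgraph of G, w a vertex of H } (with the convention log 0 = −∞). -/
open Filter Set
open scoped ENNReal NNReal

/-- An oriented graph: a set of vertices and arrows (at most one arrow `u → v`
for each ordered pair), every arrow joining two vertices of the graph. -/
structure OGraph (V : Type*) where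
  verts : Set V
  Adj : V → V → Prop
  mem_of_adj : ∀ ⦃u v⦄, Adj u v → u ∈ verts ∧ v ∈ verts

namespace OGraph

variable {V W : Type*}

/-- `H` is a subgraph of `G`. -/
def IsSubgraph (H G : OGraph V) : Prop :=
  H.verts ⊆ G.verts ∧ ∀ ⦃u v⦄, H.Adj u v → G.Adj u v

/-- The set of paths `(u_0, …, u_n)` of length `n` from `u` to `v` in `G`. -/
def pathSet (G : OGraph V) (u v : V) (n : ℕ) : Set (Fin (n + 1) → V) :=
  {f | f 0 = u ∧ f (Fin.last n) = v ∧ (∀ i, f i ∈ G.verts) ∧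
    ∀ i : Fin n, G.Adj (f i.castSucc) (f i.succ)}

/-- `p_{uv}^G(n)`: the number of paths of length `n` from `u` to `v` in `G`. -/
noncomputable def pCount (G : OGraph V) (u v : V) (n : ℕ) : ℕ :=
  (G.pathSet u v n).ncard

/-- All path counts of `G` are finite. -/
def FiniteCounts (G : OGraph V) : Prop := ∀ u v n, (G.pathSet u v n).Finite

/-- `G` is (strongly) connected: there is a path between any two vertices. -/
def Connected (G : OGraph V) : Prop :=
  ∀ u ∈ G.verts, ∀ v ∈ G.verts, ∃ n, (G.pathSet u v n).Nonempty

/-- The set of paths `(u_0, …, u_n)` from `u` to `v` avoiding `v` strictly in between. -/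
def fpathSet (G : OGraph V) (u v : V) (n : ℕ) : Set (Fin (n + 1) → V) :=
  {f ∈ G.pathSet u v n | ∀ i : Fin (n + 1), i ≠ 0 → i ≠ Fin.last n → f i ≠ v}

/-- `f_{uv}^G(n)`: the number of paths `(u_0, …, u_n)` with `u_0 = u`, `u_n = v` and
`u_i ≠ v` for `0 < i < n` (set to `0` for `n = 0`). -/
noncomputable def fCount (G : OGraph V) (u v : V) (n : ℕ) : ℕ :=
  if n = 0 then 0 else (G.fpathSet u v n).ncard

/-- The radius of convergence of the power series `∑ a_n zⁿ`. -/
noncomputable def radius (a : ℕ → ℕ) : ℝ≥0∞ :=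
  ⨆ (r : ℝ≥0) (_ : ∃ C : ℝ, ∀ n, (a n : ℝ) * (r : ℝ) ^ n ≤ C), (r : ℝ≥0∞)

/-- `R_{uv}(G)`: the radius of convergence of `∑ p_{uv}^G(n) zⁿ`. -/
noncomputable def pRadius (G : OGraph V) (u v : V) : ℝ≥0∞ := radius (G.pCount u v)

/-- `L_{uv}(G)`: the radius of convergence of `∑_{n ≥ 1} f_{uv}^G(n) zⁿ`. -/
noncomputable def fRadius (G : OGraph V) (u v : V) : ℝ≥0∞ := radius (G.fCount u v)

/-- `R(G)`; for a connected graph it coincides with every `R_{uv}(G)`. -/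
noncomputable def gRadius (G : OGraph V) : ℝ≥0∞ :=
  ⨅ u ∈ G.verts, ⨅ v ∈ G.verts, G.pRadius u v

/-- The Gurevich entropy `h(G) = - log R(G)`. -/
noncomputable def entropy (G : OGraph V) : EReal := - ENNReal.log G.gRadius

/-- The exponential growth rate `limsup (1/n) log a_n` (with `log 0 = -∞`). -/
noncomputable def egrowth (a : ℕ → ℕ) : EReal :=
  Filter.atTop.limsup fun n : ℕ => (((n : ℝ)⁻¹ : ℝ) : EReal) * ENNReal.log ((a n : ℝ≥0∞))

/-- The entropy of a (not necessarily connected) graph: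
`sup_{u ∈ V(H)} limsup (1/n) log p_{uu}^H(n)`. -/
noncomputable def supEntropy (G : OGraph V) : EReal :=
  ⨆ u ∈ G.verts, egrowth (G.pCount u u)

/-- `∑_{n ≥ 1} f_{uu}^G(n) xⁿ`, in `[0, ∞]`. -/
noncomputable def loopSum (G : OGraph V) (u : V) (x : ℝ≥0∞) : ℝ≥0∞ :=
  ∑' n : ℕ, (G.fCount u u n : ℝ≥0∞) * x ^ n

/-- `∑_{n ≥ 1} n f_{uu}^G(n) xⁿ`, in `[0, ∞]`. -/
noncomputable def loopMeanSum (G : OGraph V) (u : V) (x : ℝ≥0∞) : ℝ≥0∞ :=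
  ∑' n : ℕ, (n : ℝ≥0∞) * (G.fCount u u n : ℝ≥0∞) * x ^ n

/-- A connected graph is transient if `∑_{n ≥ 1} f_{uu}^G(n) R(G)ⁿ < 1`. -/
def Transient (G : OGraph V) : Prop := ∀ u ∈ G.verts, G.loopSum u G.gRadius < 1

/-- A connected graph is recurrent if `∑_{n ≥ 1} f_{uu}^G(n) R(G)ⁿ = 1`. -/
def Recurrent (G : OGraph V) : Prop := ∀ u ∈ G.verts, G.loopSum u G.gRadius = 1

/-- Positive recurrent: recurrent and `∑_{n ≥ 1} n f_{uu}^G(n) R(G)ⁿ < ∞`. -/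
def PosRecurrent (G : OGraph V) : Prop :=
  G.Recurrent ∧ ∀ u ∈ G.verts, G.loopMeanSum u G.gRadius < ⊤

/-- Null recurrent: recurrent and `∑_{n ≥ 1} n f_{uu}^G(n) R(G)ⁿ = ∞`. -/
def NullRecurrent (G : OGraph V) : Prop :=
  G.Recurrent ∧ ∀ u ∈ G.verts, G.loopMeanSum u G.gRadius = ⊤

/-- `G` embeds in `H` via `ι` (`G ⊂ H` after identifying `V(G)` with its image). -/
def Embeds (G : OGraph V) (H : OGraph W) (ι : V → W) : Prop :=
  Function.Injective ι ∧ (∀ v ∈ G.verts, ι v ∈ H.verts) ∧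
    ∀ ⦃u v⦄, G.Adj u v → H.Adj (ι u) (ι v)

/-- `G` embeds in `H` via `ι` as a proper subgraph (`G ⊊ H`). -/
def ProperEmbeds (G : OGraph V) (H : OGraph W) (ι : V → W) : Prop :=
  G.Embeds H ι ∧
    ¬ ((∀ w ∈ H.verts, w ∈ ι '' G.verts) ∧ ∀ ⦃a b⦄, H.Adj (ι a) (ι b) → G.Adj a b)

end OGraph

/-!
Concatenating paths gives `p_{uv}(m) p_{vw}(n) ≤ p_{uw}(m + n)`. In a connected graph this
bounds each `p_{uv}(n)` by a shift of any other `p_{u'v'}`, so all the radii `R_{uv}(G)` agree,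
and the Cauchy–Hadamard formula identifies `limsup (1/n) log p_{uv}(n)` with `-log R(G)`.
Subgraphs have fewer paths, which bounds the supremum by `-log R(G)`. Conversely, the loops of
length `n` at `u` span a finite subgraph `H` in which `n ↦ p_{uu}^H(n)` is supermultiplicative,
so `(1/n) log p_{uu}^G(n) = (1/n) log p_{uu}^H(n)` is at most the growth rate of `p_{uu}^H`.
-/

namespace OGraph

variable {V : Type*}

section Append

variable {m n : ℕ}

-- `g 0` is dropped: it is meant to coincide with `f (Fin.last m)`.
def pathAppend (f : Fin (m + 1) → V) (g : Fin (n + 1) → V) : Fin (m + n + 1) → V :=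
  fun i => if h : (i : ℕ) ≤ m then f ⟨i, by omega⟩ else g ⟨i - m, by omega⟩

theorem pathAppend_castLE (f : Fin (m + 1) → V) (g : Fin (n + 1) → V) (j : Fin (m + 1)) :
    pathAppend f g (Fin.castLE (by omega) j) = f j := by
  simp [pathAppend, j.is_le]

theorem pathAppend_natAdd {f : Fin (m + 1) → V} {g : Fin (n + 1) → V}
    (hfg : f (Fin.last m) = g 0) (j : Fin (n + 1)) :
    pathAppend f g (Fin.natAdd m j) = g j := by
  rcases Fin.eq_zero_or_eq_succ j with rfl | ⟨j, rfl⟩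
  · simpa [pathAppend, Fin.last] using hfg
  · simp [pathAppend, Fin.succ]

theorem pathAppend_mem_pathSet {G : OGraph V} {u v w : V} {f : Fin (m + 1) → V}
    {g : Fin (n + 1) → V} (hf : f ∈ G.pathSet u v m) (hg : g ∈ G.pathSet v w n) :
    pathAppend f g ∈ G.pathSet u w (m + n) := by
  obtain ⟨hf0, hfl, hfV, hfA⟩ := hf
  obtain ⟨hg0, hgl, hgV, hgA⟩ := hg
  have hfg : f (Fin.last m) = g 0 := hfl.trans hg0.symm
  refine ⟨?_, ?_, fun i => ?_, fun i => ?_⟩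
  · exact (pathAppend_castLE f g 0).trans hf0
  · exact (pathAppend_natAdd hfg (Fin.last n)).trans hgl
  · unfold pathAppend
    split_ifs
    exacts [hfV _, hgV _]
  · induction i using Fin.addCases with
    | left j =>
      have hc : (Fin.castAdd n j).castSucc = Fin.castLE (by omega) j.castSucc := rfl
      have hs : (Fin.castAdd n j).succ = Fin.castLE (by omega) j.succ := rfl
      rw [hc, hs, pathAppend_castLE, pathAppend_castLE]
      exact hfA j
    | right j =>
      have hc : (Fin.natAdd m j).castSucc = Fin.natAdd m j.castSucc := rfl
      have hs : (Fin.natAdd m j).succ = Fin.natAdd m j.succ := rfl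
      rw [hc, hs, pathAppend_natAdd hfg, pathAppend_natAdd hfg]
      exact hgA j

theorem pathAppend_injOn (G : OGraph V) (u v w : V) :
    (G.pathSet u v m ×ˢ G.pathSet v w n).InjOn fun fg => pathAppend fg.1 fg.2 := by
  rintro ⟨f, g⟩ ⟨hf, hg⟩ ⟨f', g'⟩ ⟨hf', hg'⟩ h
  have hfg : f (Fin.last m) = g 0 := hf.2.1.trans hg.1.symm
  have hfg' : f' (Fin.last m) = g' 0 := hf'.2.1.trans hg'.1.symm
  refine Prod.ext (funext fun j => ?_) (funext fun j => ?_)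
  · dsimp only
    rw [← pathAppend_castLE f g j, ← pathAppend_castLE f' g' j]
    exact congrFun h _
  · dsimp only
    rw [← pathAppend_natAdd hfg j, ← pathAppend_natAdd hfg' j]
    exact congrFun h _

end Append

theorem pCount_mul_pCount_le {G : OGraph V} (hfin : G.FiniteCounts) (u v w : V) (m n : ℕ) :
    G.pCount u v m * G.pCount v w n ≤ G.pCount u w (m + n) := by
  rw [pCount, pCount, pCount, ← Set.ncard_prod]
  exact Set.ncard_le_ncard_of_injOn _ (fun fg hfg => pathAppend_mem_pathSet hfg.1 hfg.2)
    (pathAppend_injOn G u v w) (hfin u w (m + n))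

section Subgraph

variable {G H : OGraph V}

theorem IsSubgraph.pathSet_subset (hs : H.IsSubgraph G) (u v : V) (n : ℕ) :
    H.pathSet u v n ⊆ G.pathSet u v n :=
  fun _ ⟨h0, hl, hV, hA⟩ => ⟨h0, hl, fun i => hs.1 (hV i), fun i => hs.2 (hA i)⟩

theorem finiteCounts_of_finite_verts (h : G.verts.Finite) : G.FiniteCounts := fun _ _ _ =>
  (Set.Finite.pi fun _ => h).subset fun _ hf i _ => hf.2.2.1 i

def induce (G : OGraph V) (S : Set V) : OGraph V where
  verts := G.verts ∩ S
  Adj a b := G.Adj a b ∧ a ∈ S ∧ b ∈ S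
  mem_of_adj _ _ h := ⟨⟨(G.mem_of_adj h.1).1, h.2.1⟩, ⟨(G.mem_of_adj h.1).2, h.2.2⟩⟩

theorem induce_isSubgraph (G : OGraph V) (S : Set V) : (G.induce S).IsSubgraph G :=
  ⟨Set.inter_subset_left, fun _ _ h => h.1⟩

theorem pathSet_induce_of_forall_mem {S : Set V} {u v : V} {n : ℕ}
    (hS : ∀ f ∈ G.pathSet u v n, ∀ i, f i ∈ S) :
    (G.induce S).pathSet u v n = G.pathSet u v n := by
  refine ((G.induce_isSubgraph S).pathSet_subset u v n).antisymm fun f hf => ?_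
  have hfS := hS f hf
  obtain ⟨h0, hl, hV, hA⟩ := hf
  exact ⟨h0, hl, fun i => ⟨hV i, hfS i⟩, fun i => ⟨hA i, hfS _, hfS _⟩⟩

theorem exists_finite_subgraph_pathSet_eq (hfin : G.FiniteCounts) {u : V} (hu : u ∈ G.verts)
    (v : V) (n : ℕ) :
    ∃ H : OGraph V, H.IsSubgraph G ∧ H.verts.Finite ∧ u ∈ H.verts ∧
      H.pathSet u v n = G.pathSet u v n := by
  set S := insert u (⋃ f ∈ G.pathSet u v n, Set.range f)
  have hSfin : S.Finite := ((hfin u v n).biUnion fun f _ => Set.finite_range f).insert u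
  refine ⟨G.induce S, G.induce_isSubgraph S, hSfin.subset Set.inter_subset_right,
    ⟨hu, Set.mem_insert u _⟩, pathSet_induce_of_forall_mem fun f hf i => ?_⟩
  exact Set.mem_insert_of_mem _ (Set.mem_biUnion hf (Set.mem_range_self i))

end Subgraph

theorem radius_le_radius_of_le_shift {a b : ℕ → ℕ} (k : ℕ) (h : ∀ n, a n ≤ b (n + k)) :
    radius b ≤ radius a := by
  refine iSup₂_le fun r ⟨C, hC⟩ => le_iSup₂_of_le r ?_ le_rfl
  rcases eq_or_ne r 0 with rfl | hr
  · exact ⟨a 0, fun n => by cases n <;> simp⟩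
  refine ⟨C / (r : ℝ) ^ k, fun n => (le_div_iff₀ (by positivity)).2 ?_⟩
  calc (a n : ℝ) * (r : ℝ) ^ n * (r : ℝ) ^ k = a n * (r : ℝ) ^ (n + k) := by ring
    _ ≤ b (n + k) * (r : ℝ) ^ (n + k) := by gcongr; exact_mod_cast h n
    _ ≤ C := hC (n + k)

theorem radius_eq_radius_ofScalars (a : ℕ → ℕ) :
    radius a = (FormalMultilinearSeries.ofScalars ℝ fun n => (a n : ℝ)).radius := by
  simp only [radius, FormalMultilinearSeries.radius, FormalMultilinearSeries.ofScalars_norm,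
    Real.norm_natCast, iSup_exists]

/-- Cauchy–Hadamard, transported through the order isomorphism `log : ℝ≥0∞ ≃o EReal`. -/
theorem egrowth_eq_neg_log_radius (a : ℕ → ℕ) : egrowth a = - ENNReal.log (radius a) := by
  rw [← ENNReal.log_inv, radius_eq_radius_ofScalars,
    FormalMultilinearSeries.radius_inv_eq_limsup, egrowth, ← ENNReal.logOrderIso_apply,
    ENNReal.logOrderIso.limsup_apply]
  congr 1 with n
  have hnorm : ‖FormalMultilinearSeries.ofScalars ℝ (fun n => (a n : ℝ)) n‖₊ = a n := by
    ext; simp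
  rw [ENNReal.logOrderIso_apply, ENNReal.coe_rpow_of_nonneg _ (by positivity), ENNReal.log_rpow,
    hnorm, one_div, ENNReal.coe_natCast]

theorem egrowth_mono : Monotone egrowth := fun a b h => by
  rw [egrowth_eq_neg_log_radius, egrowth_eq_neg_log_radius, EReal.neg_le_neg_iff]
  exact ENNReal.log_monotone (radius_le_radius_of_le_shift 0 h)

/-- Since `p (n * k) ≥ (p n) ^ k`, the term at index `n * k` dominates the term at index `n`. -/
theorem inv_mul_log_le_egrowth {p : ℕ → ℕ} (hp : ∀ m n, p m * p n ≤ p (m + n)) {n : ℕ}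
    (hn : n ≠ 0) : (((n : ℝ)⁻¹ : ℝ) : EReal) * ENNReal.log (p n : ℝ≥0∞) ≤ egrowth p := by
  have hpow : ∀ k, p n ^ (k + 1) ≤ p (n * (k + 1)) := by
    intro k
    induction k with
    | zero => simp
    | succ k ih =>
      calc p n ^ (k + 2) = p n ^ (k + 1) * p n := pow_succ _ _
        _ ≤ p (n * (k + 1)) * p n := Nat.mul_le_mul_right _ ih
        _ ≤ p (n * (k + 1) + n) := hp _ _
        _ = p (n * (k + 2)) := by ring_nf
  refine Filter.le_limsup_of_frequently_le' (Filter.frequently_atTop.2 fun N => ?_)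
  refine ⟨n * (N + 1), by nlinarith [Nat.one_le_iff_ne_zero.2 hn], ?_⟩
  have hscale : (((n : ℝ)⁻¹ : ℝ) : EReal) =
      ((((n * (N + 1) : ℕ) : ℝ)⁻¹ : ℝ) : EReal) * ((N + 1 : ℕ) : EReal) := by
    rw [← EReal.coe_natCast, ← EReal.coe_mul]
    congr 1
    push_cast
    field_simp
  calc (((n : ℝ)⁻¹ : ℝ) : EReal) * ENNReal.log (p n : ℝ≥0∞)
      = ((((n * (N + 1) : ℕ) : ℝ)⁻¹ : ℝ) : EReal) * ENNReal.log ((p n ^ (N + 1) : ℕ) : ℝ≥0∞) := by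
        rw [Nat.cast_pow, ENNReal.log_pow, hscale, mul_assoc]
    _ ≤ _ := by gcongr; exact hpow N

section Connected

variable {G : OGraph V}

theorem Connected.pRadius_le (hconn : G.Connected) (hfin : G.FiniteCounts) {u v u' v' : V}
    (hu : u ∈ G.verts) (hv : v ∈ G.verts) (hu' : u' ∈ G.verts) (hv' : v' ∈ G.verts) :
    G.pRadius u' v' ≤ G.pRadius u v := by
  obtain ⟨k, hk⟩ := hconn u' hu' u hu
  obtain ⟨l, hl⟩ := hconn v hv v' hv'
  have hk1 : 1 ≤ G.pCount u' u k := (Set.ncard_pos (hfin u' u k)).2 hk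
  have hl1 : 1 ≤ G.pCount v v' l := (Set.ncard_pos (hfin v v' l)).2 hl
  refine radius_le_radius_of_le_shift (k + l) fun n => ?_
  calc G.pCount u v n = 1 * G.pCount u v n * 1 := by ring
    _ ≤ G.pCount u' u k * G.pCount u v n * G.pCount v v' l := by gcongr
    _ ≤ G.pCount u' v (k + n) * G.pCount v v' l :=
        Nat.mul_le_mul_right _ (pCount_mul_pCount_le hfin u' u v k n)
    _ ≤ G.pCount u' v' (k + n + l) := pCount_mul_pCount_le hfin u' v v' (k + n) l
    _ = G.pCount u' v' (n + (k + l)) := by congr 1; omega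

theorem Connected.gRadius_eq_pRadius (hconn : G.Connected) (hfin : G.FiniteCounts) {u v : V}
    (hu : u ∈ G.verts) (hv : v ∈ G.verts) : G.gRadius = G.pRadius u v :=
  le_antisymm ((iInf₂_le u hu).trans (iInf₂_le v hv))
    (le_iInf₂ fun _ hu' => le_iInf₂ fun _ hv' => hconn.pRadius_le hfin hu' hv' hu hv)

theorem Connected.egrowth_pCount (hconn : G.Connected) (hfin : G.FiniteCounts) {u v : V}
    (hu : u ∈ G.verts) (hv : v ∈ G.verts) :
    egrowth (G.pCount u v) = - ENNReal.log G.gRadius := by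
  rw [egrowth_eq_neg_log_radius, hconn.gRadius_eq_pRadius hfin hu hv, pRadius]

theorem Connected.supEntropy_le_of_isSubgraph (hconn : G.Connected) (hfin : G.FiniteCounts)
    {H : OGraph V} (hs : H.IsSubgraph G) : H.supEntropy ≤ - ENNReal.log G.gRadius := by
  refine iSup₂_le fun w hw => ?_
  rw [← hconn.egrowth_pCount hfin (hs.1 hw) (hs.1 hw)]
  exact egrowth_mono fun n => Set.ncard_le_ncard (hs.pathSet_subset w w n) (hfin w w n)

end Connected

theorem egrowth_pCount_le_iSup_supEntropy {G : OGraph V} (hfin : G.FiniteCounts) {u : V}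
    (hu : u ∈ G.verts) :
    egrowth (G.pCount u u) ≤
      ⨆ (H : OGraph V) (_ : H.IsSubgraph G) (_ : H.verts.Finite), H.supEntropy := by
  refine Filter.limsup_le_of_le (by isBoundedDefault) ?_
  filter_upwards [Filter.eventually_ne_atTop 0] with n hn
  obtain ⟨H, hs, hHfin, huH, hpath⟩ := exists_finite_subgraph_pathSet_eq hfin hu u n
  have hsuper := pCount_mul_pCount_le (finiteCounts_of_finite_verts hHfin) u u u
  calc (((n : ℝ)⁻¹ : ℝ) : EReal) * ENNReal.log (G.pCount u u n : ℝ≥0∞)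
      = (((n : ℝ)⁻¹ : ℝ) : EReal) * ENNReal.log (H.pCount u u n : ℝ≥0∞) := by
        rw [pCount, pCount, hpath]
    _ ≤ egrowth (H.pCount u u) := inv_mul_log_le_egrowth hsuper hn
    _ ≤ H.supEntropy := le_iSup₂ (f := fun w _ => egrowth (H.pCount w w)) u huH
    _ ≤ _ := le_iSup₂_of_le H hs (le_iSup (fun _ => H.supEntropy) hHfin)

end OGraph

theorem gurevich_entropy_eq_general {V : Type*} (G : OGraph V)
    (hconn : G.Connected) (hfin : G.FiniteCounts) :
    (∀ u ∈ G.verts, ∀ v ∈ G.verts,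
        OGraph.egrowth (G.pCount u v) = - ENNReal.log G.gRadius) ∧
      - ENNReal.log G.gRadius =
        ⨆ (H : OGraph V) (_ : H.IsSubgraph G) (_ : H.verts.Finite) (w : V) (_ : w ∈ H.verts),
          OGraph.egrowth (H.pCount w w) := by
  refine ⟨fun u hu v hv => hconn.egrowth_pCount hfin hu hv, le_antisymm ?_ ?_⟩
  · rcases G.verts.eq_empty_or_nonempty with hempty | ⟨u, hu⟩
    · simp [OGraph.gRadius, hempty]
    · rw [← hconn.egrowth_pCount hfin hu hu]
      exact OGraph.egrowth_pCount_le_iSup_supEntropy hfin hu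
  · exact iSup₂_le fun H hs => iSup_le fun _ => hconn.supEntropy_le_of_isSubgraph hfin hs

/-- For a connected graph, `limsup (1/n) log p_{uv}^G(n) = - log R(G)` for all
vertices `u, v`, and this value is the supremum, over finite subgraphs `H` and vertices `w` of
`H`, of `limsup (1/n) log p_{ww}^H(n)`. -/
theorem gurevich_entropy_eq {V : Type*} [Countable V] (G : OGraph V)
    (hconn : G.Connected) (hfin : G.FiniteCounts) :
    (∀ u ∈ G.verts, ∀ v ∈ G.verts,
        OGraph.egrowth (G.pCount u v) = - ENNReal.log G.gRadius) ∧
      - ENNReal.log G.gRadius =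
        ⨆ (H : OGraph V) (_ : H.IsSubgraph G) (_ : H.verts.Finite) (w : V) (_ : w ∈ H.verts),
          OGraph.egrowth (H.pCount w w) :=
  gurevich_entropy_eq_general G hconn hfin
end

section
/- Let G be an oriented graph whose vertex set is ℕ, let Γ_G be its space of two-sided infinite paths with the distance d, and let Γ̄_G be the closure of Γ_G in (ℕ∪{∞})^ℤ with d extended by D(a,∞)=2^{−a}, D(∞,∞)=0. Then the local entropies of the shift σ with respect to d satisfy h_loc(Γ_G) = h_loc(Γ̄_G). -/
open Filter Set
open scoped ENNReal NNReal

open OGraph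

/-- The shift map on two-sided sequences. -/
def shift {α : Type*} (x : ℤ → α) : ℤ → α := fun n => x (n + 1)

/-- `Γ_G`: the set of two-sided infinite paths in `G`. -/
def OGraph.pathsZ (G : OGraph ℕ) : Set (ℤ → ℕ) :=
  {u | ∀ n : ℤ, G.Adj (u n) (u (n + 1))}

/-- `D(a,b) = |2⁻ᵃ - 2⁻ᵇ|` on the vertex set `ℕ`. -/
noncomputable def vdist (a b : ℕ) : ℝ := |(2 : ℝ)⁻¹ ^ a - (2 : ℝ)⁻¹ ^ b|

/-- The distance `d` on the path space `Γ_G ⊆ ℤ → ℕ`. -/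
noncomputable def pdist (u v : ℤ → ℕ) : ℝ :=
  ∑' n : ℤ, vdist (u n) (v n) * (2 : ℝ)⁻¹ ^ n.natAbs

/-- The embedding of `ℕ ∪ {∞}` into `ℝ` sending `a` to `2⁻ᵃ` (and `∞` to `0`):
sequences of vertices become sequences of reals, on which the distance `d`
(and its extension to the compactification) is given by `rdist`. -/
noncomputable def embed (u : ℤ → ℕ) : ℤ → ℝ := fun n => (2 : ℝ)⁻¹ ^ (u n)

/-- The distance `d` extended to the compactification `(ℕ ∪ {∞})^ℤ`,
realized on sequences of reals. -/
noncomputable def rdist (x y : ℤ → ℝ) : ℝ :=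
  ∑' n : ℤ, |x n - y n| * (2 : ℝ)⁻¹ ^ n.natAbs

/-- The Bowen ball of centre `x`, radius `ε` and order `n`. -/
def bowenBall {X : Type*} (ρ : X → X → ℝ) (T : X → X) (x : X) (ε : ℝ) (n : ℕ) : Set X :=
  {y | ∀ i < n, ρ (T^[i] x) (T^[i] y) < ε}

/-- `E` is a `(δ, n)`-separated set. -/
def IsSeparated {X : Type*} (ρ : X → X → ℝ) (T : X → X) (δ : ℝ) (n : ℕ) (E : Set X) : Prop :=
  ∀ y ∈ E, ∀ z ∈ E, y ≠ z → ∃ k < n, δ ≤ ρ (T^[k] y) (T^[k] z)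

/-- `s_n(δ, Y)`: the maximal cardinality of a `(δ, n)`-separated subset of `Y`. -/
noncomputable def sepCount {X : Type*} (ρ : X → X → ℝ) (T : X → X) (δ : ℝ) (n : ℕ)
    (Y : Set X) : ℝ≥0∞ :=
  ⨆ (E : Set X) (_ : E ⊆ Y) (_ : IsSeparated ρ T δ n E), (E.encard : ℝ≥0∞)

/-- The local entropy of `T` on `Y`:
`h_loc = lim_{ε → 0} lim_{δ → 0} limsup_n (1/n) sup_x log s_n(δ, B_n(x,ε))`,
the (monotone) limits being written as `⨅`/`⨆`. -/
noncomputable def hlocOn {X : Type*} (ρ : X → X → ℝ) (T : X → X) (Y : Set X) : EReal :=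
  ⨅ ε ∈ Set.Ioi (0 : ℝ), ⨆ δ ∈ Set.Ioi (0 : ℝ),
    Filter.atTop.limsup fun n : ℕ =>
      (((n : ℝ)⁻¹ : ℝ) : EReal) *
        ENNReal.log (⨆ x ∈ Y, sepCount ρ T δ n (bowenBall ρ T x ε n ∩ Y))

namespace Aux

def inK (x : ℤ → ℝ) : Prop := ∀ n, x n ∈ Set.Icc (0:ℝ) 1

lemma wsum : Summable (fun n : ℤ => (2:ℝ)⁻¹ ^ n.natAbs) := by
  apply Summable.of_nat_of_neg <;>
    · simp only [Int.natAbs_natCast, Int.natAbs_neg]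
      exact summable_geometric_of_lt_one (by norm_num) (by norm_num)

lemma abs_sub_le_one {x y : ℤ → ℝ} (hx : inK x) (hy : inK y) (n : ℤ) : |x n - y n| ≤ 1 := by
  obtain ⟨h1, h2⟩ := hx n; obtain ⟨h3, h4⟩ := hy n
  rw [abs_le]; constructor <;> linarith

lemma summable_rdist {x y : ℤ → ℝ} (hx : inK x) (hy : inK y) :
    Summable (fun n : ℤ => |x n - y n| * (2:ℝ)⁻¹ ^ n.natAbs) := by
  refine Summable.of_nonneg_of_le (fun n => by positivity) (fun n => ?_) wsum
  calc |x n - y n| * (2:ℝ)⁻¹ ^ n.natAbs ≤ 1 * (2:ℝ)⁻¹ ^ n.natAbs := by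
        exact mul_le_mul_of_nonneg_right (abs_sub_le_one hx hy n) (by positivity)
    _ = _ := one_mul _

lemma rdist_nonneg (x y : ℤ → ℝ) : 0 ≤ rdist x y :=
  tsum_nonneg (fun n => by positivity)

lemma rdist_self (x : ℤ → ℝ) : rdist x x = 0 := by simp [rdist]

lemma rdist_comm (x y : ℤ → ℝ) : rdist x y = rdist y x := by
  simp [rdist, abs_sub_comm]

lemma rdist_triangle {x y z : ℤ → ℝ} (hx : inK x) (hy : inK y) (hz : inK z) :
    rdist x z ≤ rdist x y + rdist y z := by
  rw [rdist, rdist, rdist, ← Summable.tsum_add (summable_rdist hx hy) (summable_rdist hy hz)]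
  refine Summable.tsum_le_tsum (fun n => ?_) (summable_rdist hx hz)
    ((summable_rdist hx hy).add (summable_rdist hy hz))
  rw [← add_mul]
  exact mul_le_mul_of_nonneg_right (abs_sub_le _ _ _) (by positivity)

lemma shift_iterate {α : Type*} (x : ℤ → α) (i : ℕ) (n : ℤ) :
    (shift^[i] x) n = x (n + i) := by
  induction i generalizing n with
  | zero => simp
  | succ i ih =>
    rw [Function.iterate_succ_apply', shift, ih]
    congr 1
    push_cast
    ring

lemma inK_shift {x : ℤ → ℝ} (hx : inK x) : inK (shift x) := fun n => hx _

lemma inK_iterate {x : ℤ → ℝ} (hx : inK x) (i : ℕ) : inK (shift^[i] x) := by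
  induction i with
  | zero => exact hx
  | succ i ih => rw [Function.iterate_succ_apply']; exact inK_shift ih

end Aux

namespace Aux2
open Aux

set_option maxHeartbeats 1000000 in
lemma rdist_shift_le {x y : ℤ → ℝ} (hx : inK x) (hy : inK y) :
    rdist (shift x) (shift y) ≤ 2 * rdist x y := by
  set g : ℤ → ℝ := fun n => |x n - y n| * (2:ℝ)⁻¹ ^ n.natAbs with hg
  have hgsum : Summable g := summable_rdist hx hy
  have hsum1 : Summable (fun n : ℤ => g (n + 1)) :=
    (Equiv.addRight (1:ℤ)).summable_iff.mpr hgsum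
  have key : ∀ n : ℤ, |x (n+1) - y (n+1)| * (2:ℝ)⁻¹ ^ n.natAbs ≤ 2 * g (n + 1) := by
    intro n
    have h1 : (n+1).natAbs ≤ n.natAbs + 1 := by omega
    have h2 : (2:ℝ)⁻¹ ^ n.natAbs ≤ 2 * (2:ℝ)⁻¹ ^ (n+1).natAbs := by
      have := pow_le_pow_of_le_one (by norm_num : (0:ℝ) ≤ 2⁻¹) (by norm_num) h1
      rw [pow_succ] at this
      nlinarith [pow_nonneg (by norm_num : (0:ℝ) ≤ 2⁻¹) (n+1).natAbs]
    calc |x (n+1) - y (n+1)| * (2:ℝ)⁻¹ ^ n.natAbs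
        ≤ |x (n+1) - y (n+1)| * (2 * (2:ℝ)⁻¹ ^ (n+1).natAbs) :=
          mul_le_mul_of_nonneg_left h2 (abs_nonneg _)
      _ = 2 * g (n + 1) := by rw [hg]; ring
  calc rdist (shift x) (shift y)
      = ∑' n : ℤ, |x (n+1) - y (n+1)| * (2:ℝ)⁻¹ ^ n.natAbs := rfl
    _ ≤ ∑' n : ℤ, 2 * g (n + 1) :=
        Summable.tsum_le_tsum key (summable_rdist (inK_shift hx) (inK_shift hy)) (hsum1.mul_left 2)
    _ = 2 * ∑' n : ℤ, g (n + 1) := tsum_mul_left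
    _ = 2 * ∑' n : ℤ, g n := congrArg (fun t => 2 * t) ((Equiv.addRight (1:ℤ)).tsum_eq g)
    _ = 2 * rdist x y := rfl

lemma rdist_iterate_le {x y : ℤ → ℝ} (hx : inK x) (hy : inK y) (i : ℕ) :
    rdist (shift^[i] x) (shift^[i] y) ≤ 2 ^ i * rdist x y := by
  induction i with
  | zero => simp
  | succ i ih =>
    rw [Function.iterate_succ_apply', Function.iterate_succ_apply']
    calc rdist (shift (shift^[i] x)) (shift (shift^[i] y))
        ≤ 2 * rdist (shift^[i] x) (shift^[i] y) :=
          rdist_shift_le (inK_iterate hx i) (inK_iterate hy i)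
      _ ≤ 2 * (2 ^ i * rdist x y) := by linarith
      _ = 2 ^ (i+1) * rdist x y := by ring

end Aux2

namespace Aux3
open Aux Aux2

lemma inK_closure {S : Set (ℤ → ℝ)} (hSK : ∀ y ∈ S, inK y) {x : ℤ → ℝ}
    (hx : x ∈ closure S) : inK x := by
  have hcl : closure S ⊆ {f : ℤ → ℝ | ∀ n, f n ∈ Set.Icc (0:ℝ) 1} := by
    apply closure_minimal hSK
    have heq : {f : ℤ → ℝ | ∀ n, f n ∈ Set.Icc (0:ℝ) 1} =
        ⋂ n : ℤ, (fun f : ℤ → ℝ => f n) ⁻¹' Set.Icc (0:ℝ) 1 := by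
      ext f; simp
    show IsClosed {f : ℤ → ℝ | ∀ n, f n ∈ Set.Icc (0:ℝ) 1}
    rw [heq]
    exact isClosed_iInter (fun n => IsClosed.preimage (continuous_apply n) isClosed_Icc)
  exact hcl hx


lemma approx_basic {S : Set (ℤ → ℝ)} (hSK : ∀ y ∈ S, inK y) {x : ℤ → ℝ}
    (hx : x ∈ closure S) {β : ℝ} (hβ : 0 < β) : ∃ x' ∈ S, rdist x x' < β := by
  have hxK : inK x := inK_closure hSK hx
  set w : ℤ → ℝ := fun n => (2:ℝ)⁻¹ ^ n.natAbs with hw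
  set T : ℝ := ∑' n : ℤ, w n with hT
  have hT0 : 0 ≤ T := tsum_nonneg (fun n => by positivity)
  have hT1 : (0:ℝ) < T + 1 := by linarith
  set γ : ℝ := β / (2 * (T + 1)) with hγdef
  have hγ : 0 < γ := by positivity
  -- find a finset with small tail
  have htail : ∃ F : Finset ℤ, ∑' n : {m // m ∉ F}, w n < β / 2 := by
    have h0 : (0:ℝ) < β / 2 := by linarith
    have := (tendsto_tsum_compl_atTop_zero w).eventually_lt_const h0
    exact this.exists
  obtain ⟨F, hF⟩ := htail
  -- find x' close on F
  have hU : (⋂ n ∈ F, {y : ℤ → ℝ | |y n - x n| < γ}) ∈ nhds x := by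
    refine (Filter.biInter_finset_mem F).mpr (fun n _ => ?_)
    have hopen : IsOpen {y : ℤ → ℝ | |y n - x n| < γ} := by
      have : {y : ℤ → ℝ | |y n - x n| < γ} = (fun y : ℤ → ℝ => y n) ⁻¹' Metric.ball (x n) γ := by
        ext y; simp [Metric.mem_ball, Real.dist_eq]
      rw [this]
      exact (continuous_apply n).isOpen_preimage _ Metric.isOpen_ball
    exact hopen.mem_nhds (by simp [hγ])
  obtain ⟨x', hx'U, hx'S⟩ := mem_closure_iff_nhds.mp hx _ hU
  refine ⟨x', hx'S, ?_⟩
  have hx'K : inK x' := hSK x' hx'S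
  have hclose : ∀ n ∈ F, |x n - x' n| < γ := by
    intro n hn
    have := Set.mem_iInter₂.mp hx'U n hn
    simpa [abs_sub_comm] using this
  set g : ℤ → ℝ := fun n => |x n - x' n| * w n with hgdef
  have hgsum : Summable g := summable_rdist hxK hx'K
  have hsplit : rdist x x' = ∑ n ∈ F, g n + ∑' n : {m // m ∉ (F : Set ℤ)}, g n :=
    (Summable.sum_add_tsum_compl hgsum).symm
  have h1 : ∑ n ∈ F, g n ≤ β / 2 := by
    calc ∑ n ∈ F, g n ≤ ∑ n ∈ F, γ * w n := by
          refine Finset.sum_le_sum (fun n hn => ?_)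
          exact mul_le_mul_of_nonneg_right (le_of_lt (hclose n hn)) (by positivity)
      _ = γ * ∑ n ∈ F, w n := by rw [Finset.mul_sum]
      _ ≤ γ * T := by
          refine mul_le_mul_of_nonneg_left ?_ (le_of_lt hγ)
          exact Summable.sum_le_tsum F (fun n _ => by positivity) wsum
      _ ≤ γ * (T + 1) := by nlinarith
      _ = β / 2 := by rw [hγdef]; field_simp
  have h2 : ∑' n : {m // m ∉ (F : Set ℤ)}, g n < β / 2 := by
    have hle : ∑' n : {m // m ∉ (F : Set ℤ)}, g n ≤ ∑' n : {m // m ∉ F}, w n := by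
      refine Summable.tsum_le_tsum (fun n => ?_) (hgsum.subtype _) (wsum.subtype _)
      calc g n = |x ↑n - x' ↑n| * w ↑n := rfl
        _ ≤ 1 * w ↑n := mul_le_mul_of_nonneg_right (abs_sub_le_one hxK hx'K _) (by positivity)
        _ = w ↑n := one_mul _
    exact lt_of_le_of_lt hle hF
  rw [hsplit]; linarith

lemma approx_orbit {S : Set (ℤ → ℝ)} (hSK : ∀ y ∈ S, inK y) {x : ℤ → ℝ}
    (hx : x ∈ closure S) (n : ℕ) {α : ℝ} (hα : 0 < α) :
    ∃ x' ∈ S, ∀ i < n, rdist (shift^[i] x) (shift^[i] x') < α := by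
  obtain ⟨x', hx'S, hd⟩ := approx_basic hSK hx (show (0:ℝ) < α / 2 ^ n by positivity)
  refine ⟨x', hx'S, fun i hi => ?_⟩
  have hxK : inK x := inK_closure hSK hx
  have hx'K : inK x' := hSK x' hx'S
  calc rdist (shift^[i] x) (shift^[i] x') ≤ 2 ^ i * rdist x x' :=
        rdist_iterate_le hxK hx'K i
    _ ≤ 2 ^ n * rdist x x' := by
        refine mul_le_mul_of_nonneg_right ?_ (rdist_nonneg _ _)
        exact pow_le_pow_right₀ (by norm_num) (le_of_lt hi)
    _ < 2 ^ n * (α / 2 ^ n) := by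
        refine mul_lt_mul_of_pos_left hd (by positivity)
    _ = α := by field_simp

end Aux3

namespace Aux4
open Aux Aux2 Aux3

lemma le_sepCount {X : Type*} {ρ : X → X → ℝ} {T : X → X} {δ : ℝ} {n : ℕ}
    {Y E : Set X} (hE : E ⊆ Y) (hsep : IsSeparated ρ T δ n E) :
    (E.encard : ℝ≥0∞) ≤ sepCount ρ T δ n Y :=
  le_iSup_of_le E (le_iSup_of_le hE (le_iSup_of_le hsep le_rfl))

lemma sepCount_mono {X : Type*} {ρ : X → X → ℝ} {T : X → X} {δ : ℝ} {n : ℕ}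
    {Y Z : Set X} (h : Y ⊆ Z) : sepCount ρ T δ n Y ≤ sepCount ρ T δ n Z := by
  refine iSup_le (fun E => iSup_le (fun hEY => iSup_le (fun hsep => ?_)))
  exact le_sepCount (hEY.trans h) hsep

lemma key {S : Set (ℤ → ℝ)} (hSK : ∀ y ∈ S, inK y) {ε δ : ℝ} (hε : 0 < ε) (hδ : 0 < δ)
    (n : ℕ) {x : ℤ → ℝ} (hx : x ∈ closure S) :
    sepCount rdist shift δ n (bowenBall rdist shift x ε n ∩ closure S) ≤
      ⨆ x' ∈ S, sepCount rdist shift (δ/2) n (bowenBall rdist shift x' (2*ε) n ∩ S) := by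
  refine iSup_le (fun E => iSup_le (fun hEsub => iSup_le (fun hEsep => ?_)))
  set α : ℝ := min (δ/4) (ε/2) with hαdef
  have hα : 0 < α := lt_min (by linarith) (by linarith)
  have hαδ : α ≤ δ/4 := min_le_left _ _
  have hαε : α ≤ ε/2 := min_le_right _ _
  obtain ⟨x', hx'S, hx'⟩ := approx_orbit hSK hx n hα
  have hφ : ∀ y : ℤ → ℝ, ∃ z : ℤ → ℝ, y ∈ closure S →
      z ∈ S ∧ ∀ i < n, rdist (shift^[i] y) (shift^[i] z) < α := by
    intro y
    by_cases hy : y ∈ closure S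
    · obtain ⟨z, hz1, hz2⟩ := approx_orbit hSK hy n hα
      exact ⟨z, fun _ => ⟨hz1, hz2⟩⟩
    · exact ⟨x', fun h => absurd h hy⟩
  choose φ hφ using hφ
  have hEcl : ∀ y ∈ E, y ∈ closure S := fun y hy => (hEsub hy).2
  have hEK : ∀ y ∈ E, inK y := fun y hy => inK_closure hSK (hEcl y hy)
  have hφS : ∀ y ∈ E, φ y ∈ S := fun y hy => (hφ y (hEcl y hy)).1
  have hφd : ∀ y ∈ E, ∀ i < n, rdist (shift^[i] y) (shift^[i] (φ y)) < α :=
    fun y hy => (hφ y (hEcl y hy)).2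
  have hxK : inK x := inK_closure hSK hx
  have hx'K : inK x' := hSK x' hx'S
  -- separation estimate for images
  have hsepest : ∀ y ∈ E, ∀ z ∈ E, y ≠ z →
      ∃ k < n, δ/2 ≤ rdist (shift^[k] (φ y)) (shift^[k] (φ z)) := by
    intro y hy z hz hne
    obtain ⟨k, hk, hsep⟩ := hEsep y hy z hz hne
    refine ⟨k, hk, ?_⟩
    have t1 : rdist (shift^[k] y) (shift^[k] z) ≤
        rdist (shift^[k] y) (shift^[k] (φ y)) + rdist (shift^[k] (φ y)) (shift^[k] z) :=
      rdist_triangle (inK_iterate (hEK y hy) k) (inK_iterate (hSK _ (hφS y hy)) k)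
        (inK_iterate (hEK z hz) k)
    have t2 : rdist (shift^[k] (φ y)) (shift^[k] z) ≤
        rdist (shift^[k] (φ y)) (shift^[k] (φ z)) + rdist (shift^[k] (φ z)) (shift^[k] z) :=
      rdist_triangle (inK_iterate (hSK _ (hφS y hy)) k) (inK_iterate (hSK _ (hφS z hz)) k)
        (inK_iterate (hEK z hz) k)
    have t3 : rdist (shift^[k] y) (shift^[k] (φ y)) < α := hφd y hy k hk
    have t4 : rdist (shift^[k] (φ z)) (shift^[k] z) < α := by
      rw [rdist_comm]; exact hφd z hz k hk
    linarith
  -- injectivity on E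
  have hinj : Set.InjOn φ E := by
    intro y hy z hz heq
    by_contra hne
    obtain ⟨k, hk, hsep⟩ := hsepest y hy z hz hne
    rw [heq, rdist_self] at hsep
    linarith
  -- image is in the Bowen ball around x'
  have himg : φ '' E ⊆ bowenBall rdist shift x' (2*ε) n ∩ S := by
    rintro _ ⟨y, hy, rfl⟩
    refine ⟨fun i hi => ?_, hφS y hy⟩
    have t1 : rdist (shift^[i] x') (shift^[i] (φ y)) ≤
        rdist (shift^[i] x') (shift^[i] x) + rdist (shift^[i] x) (shift^[i] (φ y)) :=
      rdist_triangle (inK_iterate hx'K i) (inK_iterate hxK i)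
        (inK_iterate (hSK _ (hφS y hy)) i)
    have t2 : rdist (shift^[i] x) (shift^[i] (φ y)) ≤
        rdist (shift^[i] x) (shift^[i] y) + rdist (shift^[i] y) (shift^[i] (φ y)) :=
      rdist_triangle (inK_iterate hxK i) (inK_iterate (hEK y hy) i)
        (inK_iterate (hSK _ (hφS y hy)) i)
    have t3 : rdist (shift^[i] x') (shift^[i] x) < α := by
      rw [rdist_comm]; exact hx' i hi
    have t4 : rdist (shift^[i] x) (shift^[i] y) < ε := (hEsub hy).1 i hi
    have t5 : rdist (shift^[i] y) (shift^[i] (φ y)) < α := hφd y hy i hi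
    linarith
  have hsepimg : IsSeparated rdist shift (δ/2) n (φ '' E) := by
    rintro _ ⟨y, hy, rfl⟩ _ ⟨z, hz, rfl⟩ hne
    have hyz : y ≠ z := fun h => hne (by rw [h])
    exact hsepest y hy z hz hyz
  calc (E.encard : ℝ≥0∞) = ((φ '' E).encard : ℝ≥0∞) := by rw [hinj.encard_image]
    _ ≤ sepCount rdist shift (δ/2) n (bowenBall rdist shift x' (2*ε) n ∩ S) :=
        le_sepCount himg hsepimg
    _ ≤ _ := le_iSup₂ (f := fun x' (_ : x' ∈ S) =>
        sepCount rdist shift (δ/2) n (bowenBall rdist shift x' (2*ε) n ∩ S)) x' hx'S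

end Aux4

namespace Aux5
open Aux Aux2 Aux3 Aux4

theorem main {S : Set (ℤ → ℝ)} (hSK : ∀ y ∈ S, inK y) :
    hlocOn rdist shift S = hlocOn rdist shift (closure S) := by
  have hc : ∀ n : ℕ, (0:EReal) ≤ (((n : ℝ)⁻¹ : ℝ) : EReal) := by
    intro n
    exact_mod_cast EReal.coe_nonneg.mpr (by positivity)
  apply le_antisymm
  · refine iInf_mono fun ε => iInf_mono fun hε => iSup_mono fun δ => iSup_mono fun hδ => ?_
    refine Filter.limsup_le_limsup (Filter.Eventually.of_forall fun n => ?_)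
    refine mul_le_mul_of_nonneg_left (ENNReal.log_monotone ?_) (hc n)
    refine iSup₂_le fun x hx => ?_
    refine le_iSup₂_of_le x (subset_closure hx) ?_
    exact sepCount_mono (Set.inter_subset_inter_right _ subset_closure)
  · unfold hlocOn
    refine le_iInf₂ fun ε hε => ?_
    have hε' : (0:ℝ) < ε := hε
    have hε2 : ε/2 ∈ Set.Ioi (0:ℝ) := Set.mem_Ioi.mpr (by linarith)
    refine le_trans (iInf₂_le (ε/2) hε2) ?_
    refine iSup₂_le fun δ hδ => ?_
    have hδ' : (0:ℝ) < δ := hδ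
    refine le_trans ?_ (le_iSup₂ (f := fun δ' (_ : δ' ∈ Set.Ioi (0:ℝ)) =>
      Filter.atTop.limsup fun n : ℕ =>
        (((n : ℝ)⁻¹ : ℝ) : EReal) *
          ENNReal.log (⨆ x ∈ S, sepCount rdist shift δ' n (bowenBall rdist shift x ε n ∩ S)))
      (δ/2) (Set.mem_Ioi.mpr (by linarith)))
    refine Filter.limsup_le_limsup (Filter.Eventually.of_forall fun n => ?_)
    refine mul_le_mul_of_nonneg_left (ENNReal.log_monotone ?_) (hc n)
    refine iSup₂_le fun x hx => ?_
    have hkey := key hSK (show (0:ℝ) < ε/2 by linarith) hδ' n hx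
    have h2 : 2 * (ε/2) = ε := by ring
    rw [h2] at hkey
    exact hkey

end Aux5

/-- The local entropy of the shift on `Γ_G` (with the distance `d`) equals the
local entropy of the shift on the compactification `Γ̄_G` (with the extended distance). -/
theorem hloc_eq_hloc_closure (G : OGraph ℕ) :
    hlocOn rdist shift (embed '' G.pathsZ) =
      hlocOn rdist shift (closure (embed '' G.pathsZ)) := by
  have hSK : ∀ y ∈ embed '' G.pathsZ, Aux.inK y := by
    rintro y ⟨u, -, rfl⟩ n
    simp only [embed]
    refine Set.mem_Icc.mpr ⟨by positivity, ?_⟩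
    exact pow_le_one₀ (by norm_num) (by norm_num)
  exact Aux5.main hSK
end

section
/- Let G be an oriented graph whose vertex set is ℕ, with path space Γ_G, shift σ and distance d. Let V be a set of vertices with {0,1,…,p+2} ⊆ V. Then for every ū ∈ Γ_G and every n ≥ 1, C^G(ū,V) ⊆ B_n(ū, 2^{−p}), where B_n is the Bowen ball for σ with respect to d. -/
open Filter Set
open scoped ENNReal NNReal

open OGraph

/-- `C^G(ū, V)`: the set of paths agreeing with `ū` on `V` and avoiding `V` exactly when `ū`
does. -/
def cylSet (G : OGraph ℕ) (u : ℤ → ℕ) (Vs : Set ℕ) : Set (ℤ → ℕ) :=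
  {v ∈ G.pathsZ | ∀ n : ℤ, (u n ∈ Vs → v n = u n) ∧ (u n ∉ Vs → v n ∉ Vs)}

/-!
Where `ū` visits `V ⊇ {0, …, p+2}`, every path of `C^G(ū, V)` agrees with it; elsewhere both
paths avoid `V`, so both coordinates are at least `p + 3`. Hence every coordinate distance is at
most `2^{-(p+3)}`, and since the weights `2^{-|n|}` sum to `3`, `d < 3 · 2^{-(p+3)} < 2^{-p}`.
The condition defining `C^G(ū, V)` is coordinatewise, so it survives every shift.
-/

lemma hasSum_inv_two_pow_natAbs : HasSum (fun n : ℤ => (2 : ℝ)⁻¹ ^ n.natAbs) 3 := by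
  have hgeom : HasSum (fun n : ℕ => (2 : ℝ)⁻¹ ^ n) 2 := by
    simpa using hasSum_geometric_two
  rw [show (3 : ℝ) = 2 + 2 - (2 : ℝ)⁻¹ ^ (0 : ℤ).natAbs by norm_num]
  exact HasSum.of_nat_of_neg (by simpa using hgeom) (by simpa using hgeom)

lemma shift_iterate_apply {α : Type*} (x : ℤ → α) (i : ℕ) (m : ℤ) :
    shift^[i] x m = x (m + i) := by
  induction i generalizing x with
  | zero => simp
  | succ k ih =>
    rw [Function.iterate_succ_apply, ih, shift, Nat.cast_succ, add_assoc]

lemma vdist_le_of_le {a b k : ℕ} (ha : k ≤ a) (hb : k ≤ b) : vdist a b ≤ (2 : ℝ)⁻¹ ^ k :=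
  abs_sub_le_of_nonneg_of_le (by positivity) (pow_le_pow_of_le_one (by norm_num) (by norm_num) ha)
    (by positivity) (pow_le_pow_of_le_one (by norm_num) (by norm_num) hb)

lemma pdist_le_of_forall_vdist_le {a b : ℤ → ℕ} {c : ℝ} (h : ∀ m, vdist (a m) (b m) ≤ c) :
    pdist a b ≤ 3 * c := by
  have hbound : HasSum (fun m : ℤ => c * (2 : ℝ)⁻¹ ^ m.natAbs) (3 * c) := by
    simpa [mul_comm] using hasSum_inv_two_pow_natAbs.mul_left c
  have hle : ∀ m : ℤ, vdist (a m) (b m) * (2 : ℝ)⁻¹ ^ m.natAbs ≤ c * (2 : ℝ)⁻¹ ^ m.natAbs :=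
    fun m => mul_le_mul_of_nonneg_right (h m) (by positivity)
  have hnonneg : ∀ m : ℤ, 0 ≤ vdist (a m) (b m) * (2 : ℝ)⁻¹ ^ m.natAbs :=
    fun m => mul_nonneg (abs_nonneg _) (by positivity)
  exact hasSum_le hle (Summable.of_nonneg_of_le hnonneg hle hbound.summable).hasSum hbound

lemma vdist_le_of_mem_cylSet {G : OGraph ℕ} {u v : ℤ → ℕ} {Vs : Set ℕ} {k : ℕ}
    (hV : ∀ j < k, j ∈ Vs) (hv : v ∈ cylSet G u Vs) (m : ℤ) :
    vdist (u m) (v m) ≤ (2 : ℝ)⁻¹ ^ k := by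
  by_cases hum : u m ∈ Vs
  · rw [(hv.2 m).1 hum, vdist, sub_self, abs_zero]
    positivity
  · have hvm : v m ∉ Vs := (hv.2 m).2 hum
    exact vdist_le_of_le (not_lt.1 fun h => hum (hV _ h)) (not_lt.1 fun h => hvm (hV _ h))

theorem cylSet_subset_bowenBall_general (G : OGraph ℕ) (Vs : Set ℕ) (p : ℕ)
    (hV : ∀ k ≤ p + 2, k ∈ Vs) (u : ℤ → ℕ) (n : ℕ) :
    cylSet G u Vs ⊆ bowenBall pdist shift u ((2 : ℝ)⁻¹ ^ p) n := by
  intro v hv i _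
  have hV' : ∀ j < p + 3, j ∈ Vs := fun j hj => hV j (by omega)
  calc pdist (shift^[i] u) (shift^[i] v) ≤ 3 * (2 : ℝ)⁻¹ ^ (p + 3) :=
        pdist_le_of_forall_vdist_le fun m => by
          simpa only [shift_iterate_apply] using vdist_le_of_mem_cylSet hV' hv (m + i)
    _ < (2 : ℝ)⁻¹ ^ p := by
        rw [pow_add]
        nlinarith [pow_pos (by norm_num : (0 : ℝ) < 2⁻¹) p]

/-- If `{0, …, p+2} ⊆ V`, then for every `ū ∈ Γ_G` and every `n ≥ 1`,
`C^G(ū, V) ⊆ B_n(ū, 2⁻ᵖ)`. -/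
theorem cylSet_subset_bowenBall (G : OGraph ℕ) (Vs : Set ℕ) (p : ℕ)
    (hV : ∀ k ≤ p + 2, k ∈ Vs) (u : ℤ → ℕ) (hu : u ∈ G.pathsZ) (n : ℕ) (hn : 1 ≤ n) :
    cylSet G u Vs ⊆ bowenBall pdist shift u ((2 : ℝ)⁻¹ ^ p) n :=
  cylSet_subset_bowenBall_general G Vs p hV u n
end
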